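/- arXiv:2002.00057 — 2 statements merged into one kernel-verified Lean document; each statement's English description precedes it below -/
import Mathlib

section
/- There exists an absolute constant C > 0 such that for every integer k ≥ 2 and every L > 0 there is a real polynomial N' of degree at most k−1 with the following property: for every even n ≥ 2, every D > 0, every invertible matrix A ∈ ℝ^{n×n} of the form A = [[0, M], [−Mᵀ, 0]] with ‖A‖_σ ≤ L, and every b ∈ ℝ^n with ‖A⁻¹b‖ ≤ D, the point z = N'(A)·b satisfies ‖Az + b‖² ≤ C·L²D²/k². -/
/-!
Write `b = A x`, so `‖x‖ ≤ D`. If `X + X² N(X) = X · G(-X²)` with `G(0) = 1`, the residual is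
`A N(A) b + b = A G(S) x` with `S = -A² = Aᵀ A`, and its squared norm is the quadratic form of
`S G(S)²` at `x`. As `S` is positive semidefinite with `‖S‖ ≤ L²`, this is at most
`max_{0 ≤ s ≤ L²} s G(s)² · D²`.

Take `G(s) = D_m(1 - 2s/L²) / (2m + 1)` with `D_m(cos x) = ∑_{|j| ≤ m} cos (j x)` the Dirichlet
kernel. At `s = L² sin² θ` one gets `√s · G(s) = L sin ((2m + 1) θ) / (2m + 1)`, so
`s G(s)² ≤ L² / (2m + 1)²`. For `m = ⌊k/2⌋`, `N` has degree `2m - 1 ≤ k - 1` and `2m + 1 ≥ k`,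
so the theorem holds with `C = 1`.
-/

open Matrix

/-- The spectral (operator) norm of a real matrix. -/
noncomputable def specNorm {ι : Type*} [Fintype ι] [DecidableEq ι] (A : Matrix ι ι ℝ) : ℝ :=
  ‖Matrix.toEuclideanCLM (𝕜 := ℝ) A‖

/-- The Euclidean norm of a real vector. -/
noncomputable def euclidNorm {ι : Type*} [Fintype ι] (v : ι → ℝ) : ℝ := Real.sqrt (∑ i, v i ^ 2)

open Polynomial

namespace Polynomial.Chebyshev

variable (R : Type*) [CommRing R]

/-- Evaluated at `cos x`, this is the Dirichlet kernel `∑_{|j| ≤ m} cos (j x)`. -/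
noncomputable def dirichletKernel (m : ℕ) : R[X] :=
  1 + 2 * ∑ j ∈ Finset.range m, T R (j + 1 : ℕ)

theorem U_two_mul_eq_dirichletKernel_comp (m : ℕ) :
    U R (2 * m) = (dirichletKernel R m).comp (T R 2) := by
  induction m with
  | zero => simp [dirichletKernel]
  | succ m ih =>
    have hT : T R (2 * (m : ℤ) + 2) = (T R (m + 1 : ℕ)).comp (T R 2) := by
      rw [← T_mul]; push_cast; ring_nf
    rw [Nat.cast_succ, mul_add_one, U_eq_two_mul_T_add_U, hT, ih]
    simp only [dirichletKernel, Finset.sum_range_succ, add_comp, mul_comp, one_comp, ofNat_comp]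
    ring

theorem dirichletKernel_eval_one (m : ℕ) : (dirichletKernel R m).eval 1 = 2 * m + 1 := by
  simp only [dirichletKernel, Nat.cast_add, Nat.cast_one, eval_add, eval_one, eval_mul,
    eval_ofNat, eval_finsetSum, T_eval_one, Finset.sum_const, Finset.card_range, nsmul_eq_mul,
    mul_one]
  ring

theorem natDegree_dirichletKernel_le [IsDomain R] [NeZero (2 : R)] (m : ℕ) :
    (dirichletKernel R m).natDegree ≤ m := by
  refine natDegree_add_le_of_degree_le (by simp) (natDegree_mul_le.trans ?_)
  rw [natDegree_ofNat, zero_add]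
  refine natDegree_sum_le_of_forall_le _ _ fun j hj => ?_
  rw [natDegree_T]
  simp only [Finset.mem_range] at hj
  omega

theorem sin_mul_dirichletKernel_eval_cos_two_mul (m : ℕ) (θ : ℝ) :
    Real.sin θ * (dirichletKernel ℝ m).eval (Real.cos (2 * θ)) = Real.sin ((2 * m + 1) * θ) := by
  have h := U_real_cos θ (2 * m)
  rw [U_two_mul_eq_dirichletKernel_comp, eval_comp, T_real_cos] at h
  push_cast at h
  rw [mul_comm, h]

theorem mul_dirichletKernel_eval_sq_le_one (m : ℕ) {t : ℝ} (ht₀ : 0 ≤ t) (ht₁ : t ≤ 1) :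
    t * (dirichletKernel ℝ m).eval (1 - 2 * t) ^ 2 ≤ 1 := by
  set θ := Real.arcsin (Real.sqrt t)
  have hsin : Real.sin θ = Real.sqrt t :=
    Real.sin_arcsin (by linarith [Real.sqrt_nonneg t]) (Real.sqrt_le_one.mpr ht₁)
  have hcos : Real.cos (2 * θ) = 1 - 2 * t := by
    rw [Real.cos_two_mul', Real.cos_sq', hsin, Real.sq_sqrt ht₀]
    ring
  calc t * (dirichletKernel ℝ m).eval (1 - 2 * t) ^ 2
      = (Real.sin θ * (dirichletKernel ℝ m).eval (Real.cos (2 * θ))) ^ 2 := by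
        rw [mul_pow, hsin, hcos, Real.sq_sqrt ht₀]
    _ = Real.sin ((2 * m + 1) * θ) ^ 2 := by rw [sin_mul_dirichletKernel_eval_cos_two_mul]
    _ ≤ 1 := Real.sin_sq_le_one _

end Polynomial.Chebyshev

/-- This `G` satisfies `√s · G(s) = (-1)ᵐ L T_{2m+1}(√s / L) / (2m + 1)`, a rescaled odd
Chebyshev polynomial. -/
noncomputable def chebyshevResidualFactor (L : ℝ) (m : ℕ) : ℝ[X] :=
  C (2 * m + 1 : ℝ)⁻¹ * (Chebyshev.dirichletKernel ℝ m).comp (1 - C (2 / L ^ 2) * X)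

theorem chebyshevResidualFactor_coeff_zero (L : ℝ) (m : ℕ) :
    (chebyshevResidualFactor L m).coeff 0 = 1 := by
  rw [coeff_zero_eq_eval_zero, chebyshevResidualFactor, eval_mul, eval_C, eval_comp]
  simp only [eval_sub, eval_one, eval_mul, eval_C, eval_X, mul_zero, sub_zero,
    Chebyshev.dirichletKernel_eval_one]
  exact inv_mul_cancel₀ (by positivity)

theorem natDegree_chebyshevResidualFactor_le (L : ℝ) (m : ℕ) :
    (chebyshevResidualFactor L m).natDegree ≤ m := by
  refine (natDegree_C_mul_le _ _).trans (natDegree_comp_le.trans ?_)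
  have h : (1 - C (2 / L ^ 2) * X).natDegree ≤ 1 := by compute_degree
  calc _ ≤ m * 1 := Nat.mul_le_mul (Chebyshev.natDegree_dirichletKernel_le ℝ m) h
    _ = m := mul_one m

theorem mul_chebyshevResidualFactor_eval_sq_le {L : ℝ} (hL : 0 < L) (m : ℕ) {s : ℝ}
    (hs₀ : 0 ≤ s) (hs₁ : s ≤ L ^ 2) :
    s * (chebyshevResidualFactor L m).eval s ^ 2 ≤ (L / (2 * m + 1)) ^ 2 := by
  set t := s / L ^ 2
  have ht := Chebyshev.mul_dirichletKernel_eval_sq_le_one m (t := t) (by positivity)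
    ((div_le_one (by positivity)).mpr hs₁)
  have hs : s = L ^ 2 * t := (mul_div_cancel₀ s (by positivity)).symm
  have heval : (chebyshevResidualFactor L m).eval s
      = (2 * m + 1 : ℝ)⁻¹ * (Chebyshev.dirichletKernel ℝ m).eval (1 - 2 * t) := by
    simp only [chebyshevResidualFactor, eval_mul, eval_C, eval_comp, eval_sub, eval_one, eval_X]
    rw [hs]
    field_simp
  calc s * (chebyshevResidualFactor L m).eval s ^ 2
      = (L / (2 * m + 1)) ^ 2 * (t * (Chebyshev.dirichletKernel ℝ m).eval (1 - 2 * t) ^ 2) := by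
        rw [heval, hs]
        ring
    _ ≤ (L / (2 * m + 1)) ^ 2 * 1 := by gcongr
    _ = (L / (2 * m + 1)) ^ 2 := mul_one _

section skewCorrection

variable {R : Type*} [CommRing R]

noncomputable def skewCorrection (G : R[X]) : R[X] := -(X * G.divX.comp (-X ^ 2))

theorem X_add_X_sq_mul_skewCorrection {G : R[X]} (hG : G.coeff 0 = 1) :
    X + X ^ 2 * skewCorrection G = X * G.comp (-X ^ 2) := by
  conv_rhs => rw [← divX_mul_X_add G, hG]
  simp only [skewCorrection, add_comp, mul_comp, X_comp, C_1, one_comp]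
  ring

theorem natDegree_skewCorrection_le (G : R[X]) :
    (skewCorrection G).natDegree ≤ 2 * (G.natDegree - 1) + 1 := by
  rw [skewCorrection, natDegree_neg]
  have hX : (-X ^ 2 : R[X]).natDegree ≤ 2 := by
    rw [natDegree_neg]
    exact natDegree_X_pow_le 2
  calc (X * G.divX.comp (-X ^ 2)).natDegree
      ≤ 1 + (G.natDegree - 1) * 2 := natDegree_mul_le.trans <| add_le_add natDegree_X_le <|
        natDegree_comp_le.trans <| by rw [natDegree_divX_eq_natDegree_tsub_one]; gcongr
    _ = 2 * (G.natDegree - 1) + 1 := by ring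

theorem mulVec_aeval_skewCorrection_mulVec_add {ι : Type*} [Fintype ι] [DecidableEq ι]
    (A : Matrix ι ι R) {G : R[X]} (hG : G.coeff 0 = 1) (x : ι → R) :
    A *ᵥ (aeval A (skewCorrection G) *ᵥ (A *ᵥ x)) + A *ᵥ x
      = aeval A (X * G.comp (-X ^ 2)) *ᵥ x := by
  rw [mulVec_mulVec, mulVec_mulVec, ← add_mulVec, ← X_add_X_sq_mul_skewCorrection hG,
    show (X + X ^ 2 * skewCorrection G : R[X]) = X * skewCorrection G * X + X by ring,
    map_add, map_mul, map_mul, aeval_X]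

end skewCorrection

theorem euclidNorm_sq {ι : Type*} [Fintype ι] (v : ι → ℝ) : euclidNorm v ^ 2 = v ⬝ᵥ v := by
  rw [euclidNorm, Real.sq_sqrt (by positivity)]
  simp [dotProduct, sq]

section quadraticForm

variable {ι : Type*} [Fintype ι] [DecidableEq ι]

open scoped MatrixOrder in
theorem dotProduct_cfc_mulVec_le {S : Matrix ι ι ℝ} (hS : S.IsHermitian) {f : ℝ → ℝ} {c : ℝ}
    (hf : ∀ s ∈ spectrum ℝ S, f s ≤ c) (x : ι → ℝ) :
    x ⬝ᵥ (cfc f S *ᵥ x) ≤ c * (x ⬝ᵥ x) := by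
  have h := (cfc_le_algebraMap f c S hf (S.finite_real_spectrum.continuousOn _)
    hS.isSelfAdjoint).dotProduct_mulVec_nonneg x
  rwa [Algebra.algebraMap_eq_smul_one, sub_mulVec, dotProduct_sub, sub_nonneg, smul_mulVec,
    one_mulVec, dotProduct_smul, smul_eq_mul] at h

open scoped Matrix.Norms.L2Operator in
theorem spectrum_transpose_mul_self_subset (A : Matrix ι ι ℝ) :
    spectrum ℝ (Aᵀ * A) ⊆ Set.Icc 0 (specNorm A ^ 2) := by
  intro s hs
  cases isEmpty_or_nonempty ι
  · simp [spectrum.of_subsingleton] at hs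
  have hpsd : (Aᵀ * A).PosSemidef := by
    simpa using posSemidef_conjTranspose_mul_self A
  refine ⟨(posSemidef_iff_isHermitian_and_spectrum_nonneg.mp hpsd).2 hs, ?_⟩
  have h := spectrum.norm_le_norm_of_mem hs
  rw [← conjTranspose_eq_transpose_of_trivial, l2_opNorm_conjTranspose_mul_self] at h
  rw [sq]
  exact (le_abs_self s).trans h

theorem transpose_aeval_of_isHermitian {S : Matrix ι ι ℝ} (hS : S.IsHermitian) (p : ℝ[X]) :
    (aeval S p)ᵀ = aeval S p := by
  rw [← cfc_polynomial p S hS.isSelfAdjoint, ← conjTranspose_eq_transpose_of_trivial]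
  exact cfc_predicate (R := ℝ) _ S

theorem dotProduct_self_aeval_X_mul_comp_neg_X_sq_le {A : Matrix ι ι ℝ} (hA : Aᵀ = -A)
    (G : ℝ[X]) {c : ℝ} (hc : ∀ s ∈ spectrum ℝ (Aᵀ * A), s * G.eval s ^ 2 ≤ c) (x : ι → ℝ) :
    (aeval A (X * G.comp (-X ^ 2)) *ᵥ x) ⬝ᵥ (aeval A (X * G.comp (-X ^ 2)) *ᵥ x)
      ≤ c * (x ⬝ᵥ x) := by
  have hS : (Aᵀ * A).IsHermitian := by
    simpa using isHermitian_conjTranspose_mul_self A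
  have hfactor : aeval A (X * G.comp (-X ^ 2)) = A * aeval (Aᵀ * A) G := by
    rw [aeval_mul, aeval_X, aeval_comp, hA]
    simp [sq]
  have hgram : (A * aeval (Aᵀ * A) G)ᵀ * (A * aeval (Aᵀ * A) G)
      = aeval (Aᵀ * A) (X * G ^ 2) := by
    rw [transpose_mul, transpose_aeval_of_isHermitian hS, show X * G ^ 2 = G * X * G by ring,
      map_mul, map_mul, aeval_X, mul_assoc, mul_assoc, mul_assoc]
  have hquad (M : Matrix ι ι ℝ) : (M *ᵥ x) ⬝ᵥ (M *ᵥ x) = x ⬝ᵥ ((Mᵀ * M) *ᵥ x) := by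
    rw [← mulVec_mulVec, dotProduct_mulVec x Mᵀ, vecMul_transpose]
  rw [hquad, hfactor, hgram, ← cfc_polynomial _ _ hS.isSelfAdjoint]
  exact dotProduct_cfc_mulVec_le hS (fun s hs => by simpa [mul_comm] using hc s hs) x

end quadraticForm

/-- Tightness of the dependence on the degree `k`: there is an absolute constant `C > 0`
such that for each `k ≥ 2` and `L > 0` there is a real polynomial `N'` of degree at most
`k − 1` with the property that for every even `n ≥ 2`, every `D > 0`, every invertible
`A = [[0, M], [−Mᵀ, 0]]` with `‖A‖_σ ≤ L`, and every `b` with `‖A⁻¹b‖ ≤ D`, the point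
`z = N'(A) b` satisfies `‖Az + b‖² ≤ C L² D² / k²`. -/
theorem lb_tight_in_k :
    ∃ C : ℝ, 0 < C ∧
      ∀ k : ℕ, 2 ≤ k → ∀ L : ℝ, 0 < L →
        ∃ N' : Polynomial ℝ, N'.natDegree ≤ k - 1 ∧
          ∀ n : ℕ, 2 ≤ n → Even n →
            ∀ D : ℝ, 0 < D →
              ∀ (M : Matrix (Fin (n / 2)) (Fin (n / 2)) ℝ)
                (A : Matrix (Fin (n / 2) ⊕ Fin (n / 2)) (Fin (n / 2) ⊕ Fin (n / 2)) ℝ),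
                A = Matrix.fromBlocks 0 M (-Mᵀ) 0 →
                IsUnit A →
                specNorm A ≤ L →
                ∀ b : Fin (n / 2) ⊕ Fin (n / 2) → ℝ,
                  euclidNorm (A⁻¹ *ᵥ b) ≤ D →
                  euclidNorm (A *ᵥ (Polynomial.aeval A N' *ᵥ b) + b) ^ 2
                    ≤ C * L ^ 2 * D ^ 2 / k ^ 2 := by
  refine ⟨1, one_pos, fun k hk L hL => ?_⟩
  set m := k / 2
  set G := chebyshevResidualFactor L m
  refine ⟨skewCorrection G, ?_, ?_⟩
  · have hN := natDegree_skewCorrection_le G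
    have hG : G.natDegree ≤ m := natDegree_chebyshevResidualFactor_le L m
    omega
  intro n _ _ D _ M A hA hunit hnorm b hb
  have hskew : Aᵀ = -A := by
    simp [hA, fromBlocks_transpose, fromBlocks_neg]
  set x := A⁻¹ *ᵥ b
  have hbx : b = A *ᵥ x := by
    rw [mulVec_mulVec, mul_nonsing_inv A ((isUnit_iff_isUnit_det A).mp hunit), one_mulVec]
  have hspec (s : ℝ) (hs : s ∈ spectrum ℝ (Aᵀ * A)) :
      s * G.eval s ^ 2 ≤ (L / (2 * m + 1)) ^ 2 := by
    obtain ⟨hs₀, hs₁⟩ := spectrum_transpose_mul_self_subset A hs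
    exact mul_chebyshevResidualFactor_eval_sq_le hL m hs₀
      (hs₁.trans (pow_le_pow_left₀ (norm_nonneg _) hnorm 2))
  have hk : (k : ℝ) ≤ 2 * m + 1 := by exact_mod_cast (by omega : k ≤ 2 * m + 1)
  calc euclidNorm (A *ᵥ (aeval A (skewCorrection G) *ᵥ b) + b) ^ 2
      ≤ (L / (2 * m + 1)) ^ 2 * (x ⬝ᵥ x) := by
        rw [euclidNorm_sq, hbx, mulVec_aeval_skewCorrection_mulVec_add A
          (chebyshevResidualFactor_coeff_zero L m)]
        exact dotProduct_self_aeval_X_mul_comp_neg_X_sq_le hskew G hspec x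
    _ ≤ (L / (2 * m + 1)) ^ 2 * D ^ 2 := by
        rw [← euclidNorm_sq]
        gcongr
        exact Real.sqrt_nonneg _
    _ ≤ 1 * L ^ 2 * D ^ 2 / k ^ 2 := by
        rw [div_pow, one_mul, div_mul_eq_mul_div, mul_comm (L ^ 2)]
        gcongr
end

section
/- Fix an even integer n ≥ 2, reals L, D > 0, an integer T ≥ 2, and any sequence of step sizes η : ℕ → ℝ with η_t ∈ (0, 1/L) for all t. Then there exist a matrix M ∈ ℝ^{(n/2)×(n/2)} and vectors b1, b2 ∈ ℝ^{n/2} such that, with A = [[0, M], [−Mᵀ, 0]], b = (b1, −b2), f(x,y) = xᵀMy + b1ᵀx + b2ᵀy, M invertible, ‖A‖_σ ≤ L, ‖A⁻¹b‖ = D, and saddle point (x*, y*) = −A⁻¹b, the time-varying extragradient iterates defined by z^0 = 0 and z^{t+1} = z^t − η_t·F(z^t − η_t F(z^t)) with F(z) = Az + b satisfy Gap_f^Z(x^T, y^T) ≥ LD²/(4√T), where z^T = (x^T, y^T) and Z = B̄(x*, D) × B̄(y*, D). -/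
open Matrix

/-- The Euclidean norm of a real vector. -/
noncomputable def enorm {ι : Type*} [Fintype ι] (v : ι → ℝ) : ℝ := Real.sqrt (∑ i, v i ^ 2)

/-- The primal-dual gap of `(x, y)` for the bilinear function `f(x,y) = xᵀMy + b1ᵀx + b2ᵀy`
with respect to the product of closed balls of radius `D` around the saddle point `(x*, y*)`. -/
noncomputable def gapBilin {m : ℕ} (M : Matrix (Fin m) (Fin m) ℝ) (b1 b2 : Fin m → ℝ)
    (xstar ystar : Fin m → ℝ) (D : ℝ) (x y : Fin m → ℝ) : ℝ :=
  sSup ((fun y' => x ⬝ᵥ (M *ᵥ y') + b1 ⬝ᵥ x + b2 ⬝ᵥ y') '' {y' | _root_.enorm (y' - ystar) ≤ D})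
    - sInf ((fun x' => x' ⬝ᵥ (M *ᵥ y) + b1 ⬝ᵥ x' + b2 ⬝ᵥ y) '' {x' | _root_.enorm (x' - xstar) ≤ D})

/-!
The hard instance is `M = γ I`, `b₁ = 0`, `b₂ = γ D e₀` with `γ = L / (2√T)`, so that
`A = γ K` for the complex structure `K = -J` (`K² = -1`). Identifying `K` with `i`, one
extragradient step with step size `η` multiplies `z - z*` by `1 - s² - i s`, where
`s = ηγ ≤ 1 / (2√T)`. Since `|1 - s² - i s|² ≥ 1 - s²`, after `T` steps
`|z - z*|² ≥ (1 - ∑ s_k²) D² ≥ 3D²/4`. For `M = γ I` the gap at `(x, y)` equals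
`γ D (|x - x*| + |y - y*|) ≥ γ D |z - z*|`, which is therefore at least `γ D² / 2 = LD² / (4√T)`.
-/

section EuclideanNorm

variable {ι : Type*} [Fintype ι]

lemma enorm_eq_norm_toLp (v : ι → ℝ) :
    _root_.enorm v = ‖(WithLp.toLp 2 v : EuclideanSpace ℝ ι)‖ := by
  simp [_root_.enorm, EuclideanSpace.norm_eq]

lemma dotProduct_eq_inner_toLp (v w : ι → ℝ) :
    v ⬝ᵥ w = inner ℝ (WithLp.toLp 2 v : EuclideanSpace ℝ ι) (WithLp.toLp 2 w) := by
  simp [EuclideanSpace.inner_toLp_toLp, dotProduct_comm]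

lemma abs_dotProduct_le_enorm_mul_enorm (v w : ι → ℝ) :
    |v ⬝ᵥ w| ≤ _root_.enorm v * _root_.enorm w := by
  rw [dotProduct_eq_inner_toLp, enorm_eq_norm_toLp, enorm_eq_norm_toLp]
  exact abs_real_inner_le_norm _ _

lemma enorm_smul' (c : ℝ) (v : ι → ℝ) : _root_.enorm (c • v) = |c| * _root_.enorm v := by
  rw [enorm_eq_norm_toLp, enorm_eq_norm_toLp, WithLp.toLp_smul, norm_smul, Real.norm_eq_abs]

lemma dotProduct_self_eq_enorm_sq (v : ι → ℝ) : v ⬝ᵥ v = _root_.enorm v ^ 2 := by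
  rw [dotProduct_eq_inner_toLp, enorm_eq_norm_toLp, real_inner_self_eq_norm_sq]

lemma enorm_neg' (v : ι → ℝ) : _root_.enorm (-v) = _root_.enorm v := by
  simp [_root_.enorm]

lemma enorm_single [DecidableEq ι] (i : ι) (c : ℝ) : _root_.enorm (Pi.single i c) = |c| := by
  rw [enorm_eq_norm_toLp, PiLp.toLp_single, PiLp.norm_single, Real.norm_eq_abs]

lemma enorm_sumElim_zero {κ : Type*} [Fintype κ] (v : ι → ℝ) :
    _root_.enorm (Sum.elim v (0 : κ → ℝ)) = _root_.enorm v := by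
  simp [_root_.enorm, Fintype.sum_sum_type]

lemma enorm_nonneg (v : ι → ℝ) : 0 ≤ _root_.enorm v := Real.sqrt_nonneg _

end EuclideanNorm

section AffineOnBall

variable {ι : Type*} [Fintype ι] {D : ℝ}

lemma enorm_div_enorm_smul_self_le (a : ι → ℝ) (hD : 0 ≤ D) :
    _root_.enorm ((D / _root_.enorm a) • a) ≤ D := by
  rw [enorm_smul', abs_div, abs_of_nonneg hD, abs_of_nonneg (enorm_nonneg a)]
  rcases eq_or_ne (_root_.enorm a) 0 with h | h
  · simpa [h] using hD
  · rw [div_mul_cancel₀ _ h]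

lemma dotProduct_div_enorm_smul_self (a : ι → ℝ) :
    a ⬝ᵥ ((D / _root_.enorm a) • a) = D * _root_.enorm a := by
  rw [dotProduct_smul, smul_eq_mul, dotProduct_self_eq_enorm_sq]
  rcases eq_or_ne (_root_.enorm a) 0 with h | h
  · simp [h]
  · field_simp

lemma isGreatest_image_dotProduct_add (a p : ι → ℝ) (c : ℝ) (hD : 0 ≤ D) :
    IsGreatest ((fun y => a ⬝ᵥ y + c) '' {y | _root_.enorm (y - p) ≤ D})
      (a ⬝ᵥ p + c + D * _root_.enorm a) := by
  refine ⟨⟨p + (D / _root_.enorm a) • a, ?_, ?_⟩, ?_⟩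
  · simpa using enorm_div_enorm_smul_self_le a hD
  · simp only [dotProduct_add, dotProduct_div_enorm_smul_self]
    ring
  · rintro _ ⟨y, hy, rfl⟩
    have hCS := abs_dotProduct_le_enorm_mul_enorm a (y - p)
    rw [dotProduct_sub] at hCS
    nlinarith [abs_le.mp hCS, enorm_nonneg a, mul_le_mul_of_nonneg_left hy (enorm_nonneg a)]

lemma isLeast_image_dotProduct_add (a p : ι → ℝ) (c : ℝ) (hD : 0 ≤ D) :
    IsLeast ((fun y => a ⬝ᵥ y + c) '' {y | _root_.enorm (y - p) ≤ D})
      (a ⬝ᵥ p + c - D * _root_.enorm a) := by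
  refine ⟨⟨p - (D / _root_.enorm a) • a, ?_, ?_⟩, ?_⟩
  · simpa [enorm_neg'] using enorm_div_enorm_smul_self_le a hD
  · simp only [dotProduct_sub, dotProduct_div_enorm_smul_self]
    ring
  · rintro _ ⟨y, hy, rfl⟩
    have hCS := abs_dotProduct_le_enorm_mul_enorm a (y - p)
    rw [dotProduct_sub] at hCS
    nlinarith [abs_le.mp hCS, enorm_nonneg a, mul_le_mul_of_nonneg_left hy (enorm_nonneg a)]

end AffineOnBall

lemma gapBilin_eq_of_isSaddle {m : ℕ} (M : Matrix (Fin m) (Fin m) ℝ) (b1 b2 xs ys : Fin m → ℝ)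
    {D : ℝ} (hD : 0 ≤ D) (hxs : xs ᵥ* M + b2 = 0) (hys : M *ᵥ ys + b1 = 0) (x y : Fin m → ℝ) :
    gapBilin M b1 b2 xs ys D x y
      = D * (_root_.enorm ((x - xs) ᵥ* M) + _root_.enorm (M *ᵥ (y - ys))) := by
  have hsup : (fun y' => x ⬝ᵥ (M *ᵥ y') + b1 ⬝ᵥ x + b2 ⬝ᵥ y')
      = fun y' => (x ᵥ* M + b2) ⬝ᵥ y' + b1 ⬝ᵥ x := by
    funext y'
    rw [add_dotProduct, dotProduct_mulVec]
    ring
  have hinf : (fun x' => x' ⬝ᵥ (M *ᵥ y) + b1 ⬝ᵥ x' + b2 ⬝ᵥ y)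
      = fun x' => (M *ᵥ y + b1) ⬝ᵥ x' + b2 ⬝ᵥ y := by
    funext x'
    rw [add_dotProduct, dotProduct_comm x']
  rw [gapBilin, hsup, hinf, (isGreatest_image_dotProduct_add _ _ _ hD).csSup_eq,
    (isLeast_image_dotProduct_add _ _ _ hD).csInf_eq]
  obtain rfl : b2 = -(xs ᵥ* M) := eq_neg_of_add_eq_zero_right hxs
  obtain rfl : b1 = -(M *ᵥ ys) := eq_neg_of_add_eq_zero_right hys
  simp only [← sub_eq_add_neg, ← sub_vecMul, ← mulVec_sub, neg_dotProduct]
  rw [dotProduct_comm (M *ᵥ ys), dotProduct_comm (M *ᵥ (y - ys)), ← dotProduct_mulVec,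
    ← dotProduct_mulVec, mulVec_sub]
  simp only [sub_dotProduct, dotProduct_sub]
  ring

lemma gapBilin_smul_one_eq {m : ℕ} {γ D : ℝ} (hγ : 0 ≤ γ) (hD : 0 ≤ D)
    {b1 b2 xs ys : Fin m → ℝ} (hxs : γ • xs + b2 = 0) (hys : γ • ys + b1 = 0) (x y : Fin m → ℝ) :
    gapBilin (γ • 1) b1 b2 xs ys D x y
      = γ * D * (_root_.enorm (x - xs) + _root_.enorm (y - ys)) := by
  rw [gapBilin_eq_of_isSaddle _ _ _ _ _ hD (by rwa [vecMul_smul, vecMul_one])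
    (by rwa [smul_mulVec, one_mulVec]), vecMul_smul, vecMul_one, smul_mulVec, one_mulVec,
    enorm_smul', enorm_smul', abs_of_nonneg hγ]
  ring

section SpecNorm

open scoped Matrix.Norms.L2Operator

variable {ι : Type*} [Fintype ι] [DecidableEq ι]

lemma specNorm_eq_norm (A : Matrix ι ι ℝ) : specNorm A = ‖A‖ := rfl

lemma specNorm_smul (c : ℝ) (A : Matrix ι ι ℝ) : specNorm (c • A) = |c| * specNorm A := by
  rw [specNorm_eq_norm, specNorm_eq_norm, norm_smul, Real.norm_eq_abs]

lemma specNorm_neg (A : Matrix ι ι ℝ) : specNorm (-A) = specNorm A := by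
  rw [specNorm_eq_norm, specNorm_eq_norm, norm_neg]

lemma specNorm_J (l : Type*) [Fintype l] [DecidableEq l] [Nonempty l] :
    specNorm (J l ℝ) = 1 := by
  rw [specNorm_eq_norm]
  refine CStarRing.norm_of_mem_unitary (Unitary.mem_iff.mpr ⟨?_, ?_⟩) <;>
    simp [star_eq_conjTranspose, J_transpose, J_squared]

end SpecNorm

lemma one_sub_sum_le_prod_one_sub {κ R : Type*} [CommRing R] [LinearOrder R] [IsStrictOrderedRing R]
    (s : Finset κ) {x : κ → R} (h0 : ∀ i ∈ s, 0 ≤ x i) (h1 : ∀ i ∈ s, x i ≤ 1) :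
    1 - ∑ i ∈ s, x i ≤ ∏ i ∈ s, (1 - x i) := by
  classical
  induction s using Finset.induction_on with
  | empty => simp
  | insert a s ha ih =>
    rw [Finset.sum_insert ha, Finset.prod_insert ha]
    have hs0 : 0 ≤ ∑ i ∈ s, x i := Finset.sum_nonneg fun i hi => h0 i (Finset.mem_insert_of_mem hi)
    have ih := ih (fun i hi => h0 i (Finset.mem_insert_of_mem hi))
      (fun i hi => h1 i (Finset.mem_insert_of_mem hi))
    have ha0 := h0 a (Finset.mem_insert_self a s)
    have ha1 := h1 a (Finset.mem_insert_self a s)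
    nlinarith [mul_le_mul_of_nonneg_left ih (sub_nonneg.mpr ha1), mul_nonneg ha0 hs0]

section Extragradient

variable {ι : Type*} [Fintype ι]

lemma eg_step_sub_of_mulVec_add_eq_zero (A : Matrix ι ι ℝ) {b zs : ι → ℝ}
    (hzs : A *ᵥ zs + b = 0) (η : ℝ) (z : ι → ℝ) :
    z - η • (A *ᵥ (z - η • (A *ᵥ z + b)) + b) - zs
      = (z - zs) - η • (A *ᵥ (z - zs)) + η ^ 2 • (A *ᵥ (A *ᵥ (z - zs))) := by
  obtain rfl : b = -(A *ᵥ zs) := eq_neg_of_add_eq_zero_right hzs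
  simp only [mulVec_add, mulVec_sub, mulVec_neg, mulVec_smul]
  module

variable [DecidableEq ι]

lemma smul_mulVec_smul_mulVec_of_mul_self_eq_neg_one {K : Matrix ι ι ℝ} (hK : K * K = -1)
    (γ : ℝ) (w : ι → ℝ) : (γ • K) *ᵥ ((γ • K) *ᵥ w) = -(γ ^ 2 • w) := by
  rw [mulVec_mulVec, smul_mul_smul_comm, hK, smul_neg, neg_mulVec, smul_mulVec, one_mulVec, sq]

noncomputable def egMultiplier (s : ℕ → ℝ) (t : ℕ) : ℂ :=
  ∏ k ∈ Finset.range t, ⟨1 - s k ^ 2, -s k⟩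

lemma egMultiplier_succ (s : ℕ → ℝ) (t : ℕ) :
    egMultiplier s (t + 1) = egMultiplier s t * ⟨1 - s t ^ 2, -s t⟩ :=
  Finset.prod_range_succ _ _

lemma one_half_le_norm_egMultiplier {s : ℕ → ℝ} {T : ℕ}
    (hs : ∑ k ∈ Finset.range T, s k ^ 2 ≤ 3 / 4) : 1 / 2 ≤ ‖egMultiplier s T‖ := by
  have hs1 : ∀ k ∈ Finset.range T, s k ^ 2 ≤ 1 := fun k hk =>
    (Finset.single_le_sum (fun j _ => sq_nonneg (s j)) hk).trans (hs.trans (by norm_num))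
  have hsq : 1 / 4 ≤ ‖egMultiplier s T‖ ^ 2 :=
    calc (1 / 4 : ℝ) ≤ 1 - ∑ k ∈ Finset.range T, s k ^ 2 := by linarith
      _ ≤ ∏ k ∈ Finset.range T, (1 - s k ^ 2) :=
        one_sub_sum_le_prod_one_sub _ (fun k _ => sq_nonneg (s k)) hs1
      _ ≤ ∏ k ∈ Finset.range T, ‖(⟨1 - s k ^ 2, -s k⟩ : ℂ)‖ ^ 2 := by
        refine Finset.prod_le_prod (fun k hk => sub_nonneg.mpr (hs1 k hk)) fun k _ => ?_
        rw [Complex.sq_norm, Complex.normSq_mk]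
        nlinarith [sq_nonneg (s k ^ 2)]
      _ = ‖egMultiplier s T‖ ^ 2 := by rw [egMultiplier, norm_prod, Finset.prod_pow]
  nlinarith [norm_nonneg (egMultiplier s T)]

lemma eg_iterate_sub_eq {K : Matrix ι ι ℝ} (hK : K * K = -1) (γ : ℝ)
    {b zs : ι → ℝ} (hzs : (γ • K) *ᵥ zs + b = 0) (η : ℕ → ℝ) (z : ℕ → ι → ℝ)
    (hz : ∀ t, z (t + 1) = z t - η t • ((γ • K) *ᵥ (z t - η t • ((γ • K) *ᵥ z t + b)) + b))
    (t : ℕ) :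
    z t - zs = (egMultiplier (fun k => η k * γ) t).re • (z 0 - zs)
      + (egMultiplier (fun k => η k * γ) t).im • (K *ᵥ (z 0 - zs)) := by
  induction t with
  | zero => simp [egMultiplier]
  | succ t ih =>
    have hKK : ∀ w, K *ᵥ (K *ᵥ w) = -w := fun w => by
      rw [mulVec_mulVec, hK, neg_mulVec, one_mulVec]
    rw [hz, eg_step_sub_of_mulVec_add_eq_zero _ hzs,
      smul_mulVec_smul_mulVec_of_mul_self_eq_neg_one hK, ih, egMultiplier_succ]
    simp only [smul_mulVec, mulVec_add, mulVec_smul, hKK, Complex.mul_re, Complex.mul_im]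
    module

end Extragradient

lemma sum_sq_mul_le_one_fourth {L : ℝ} (hL : 0 < L) {η : ℕ → ℝ}
    (hη : ∀ t, η t ∈ Set.Ioo 0 (1 / L)) (T : ℕ) :
    ∑ k ∈ Finset.range T, (η k * (L / (2 * Real.sqrt T))) ^ 2 ≤ 1 / 4 := by
  have hterm : ∀ k, (η k * (L / (2 * Real.sqrt T))) ^ 2 ≤ 1 / (4 * T) := fun k => by
    obtain ⟨hη0, hη1⟩ := hη k
    have hle : η k * (L / (2 * Real.sqrt T)) ≤ 1 / (2 * Real.sqrt T) := by
      rw [← mul_div_assoc]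
      exact div_le_div_of_nonneg_right ((lt_div_iff₀ hL).mp hη1).le (by positivity)
    calc (η k * (L / (2 * Real.sqrt T))) ^ 2 ≤ (1 / (2 * Real.sqrt T)) ^ 2 :=
          pow_le_pow_left₀ (by positivity) hle 2
      _ = 1 / (4 * T) := by rw [div_pow, mul_pow, Real.sq_sqrt (Nat.cast_nonneg T)]; norm_num
  calc ∑ k ∈ Finset.range T, (η k * (L / (2 * Real.sqrt T))) ^ 2
      ≤ ∑ _k ∈ Finset.range T, 1 / (4 * (T : ℝ)) := Finset.sum_le_sum fun k _ => hterm k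
    _ ≤ 1 / 4 := by
      rcases Nat.eq_zero_or_pos T with rfl | hT
      · simp
      · rw [Finset.sum_const, Finset.card_range, nsmul_eq_mul]
        exact le_of_eq (by field_simp)

lemma fromBlocks_smul_one_eq_smul_neg_J {l : Type*} [DecidableEq l] (γ : ℝ) :
    fromBlocks 0 (γ • 1 : Matrix l l ℝ) (-(γ • 1)ᵀ) 0 = γ • -J l ℝ := by
  simp [J, fromBlocks_smul, fromBlocks_neg]

section HardInstance

variable {l : Type*} [Fintype l] [DecidableEq l]

lemma J_mulVec_sumElim {R : Type*} [CommRing R] (u v : l → R) :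
    J l R *ᵥ Sum.elim u v = Sum.elim (-v) u := by
  simp [J, fromBlocks_mulVec, neg_mulVec]

lemma specNorm_smul_neg_J [Nonempty l] (γ : ℝ) : specNorm (γ • -J l ℝ) = |γ| := by
  rw [specNorm_smul, specNorm_neg, specNorm_J, mul_one]

lemma inv_smul_neg_J_mulVec {γ : ℝ} (hγ : γ ≠ 0) (p : l → ℝ) :
    (γ • -J l ℝ)⁻¹ *ᵥ Sum.elim 0 (-(γ • p)) = Sum.elim p 0 := by
  have hinv : (γ • -J l ℝ)⁻¹ = γ⁻¹ • J l ℝ := by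
    refine inv_eq_right_inv ?_
    rw [smul_mul_smul_comm, neg_mul, J_squared, neg_neg, mul_inv_cancel₀ hγ, one_smul]
  rw [hinv, smul_mulVec, J_mulVec_sumElim]
  ext (i | i) <;> simp [hγ]

lemma eg_iterate_smul_neg_J (γ : ℝ) (p : l → ℝ) (η : ℕ → ℝ) (z : ℕ → l ⊕ l → ℝ) (hz0 : z 0 = 0)
    (hz : ∀ t, z (t + 1) = z t - η t • ((γ • -J l ℝ) *ᵥ
      (z t - η t • ((γ • -J l ℝ) *ᵥ z t + Sum.elim (0 : l → ℝ) (-(γ • p))))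
        + Sum.elim (0 : l → ℝ) (-(γ • p))))
    (t : ℕ) :
    z t + Sum.elim p 0 = Sum.elim ((egMultiplier (fun k => η k * γ) t).re • p)
      (-((egMultiplier (fun k => η k * γ) t).im • p)) := by
  have hsaddle : (γ • -J l ℝ) *ᵥ -Sum.elim p 0 + Sum.elim (0 : l → ℝ) (-(γ • p)) = 0 := by
    rw [smul_mulVec, neg_mulVec, mulVec_neg, J_mulVec_sumElim]
    ext (i | i) <;> simp
  have h := eg_iterate_sub_eq (by rw [neg_mul_neg, J_squared]) γ hsaddle η z hz t
  rw [hz0, zero_sub, neg_neg, neg_mulVec, J_mulVec_sumElim, sub_neg_eq_add] at h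
  rw [h]
  ext (i | i) <;> simp

end HardInstance

theorem eg_timevarying_lower_bound_general
    (n : ℕ) (hn : 2 ≤ n)
    (L D : ℝ) (hL : 0 < L) (hD : 0 < D)
    (T : ℕ) (hT : 2 ≤ T)
    (η : ℕ → ℝ) (hη : ∀ t : ℕ, η t ∈ Set.Ioo 0 (1 / L)) :
    ∃ (M : Matrix (Fin (n / 2)) (Fin (n / 2)) ℝ) (b1 b2 : Fin (n / 2) → ℝ),
      IsUnit M ∧
      ∀ (A : Matrix (Fin (n / 2) ⊕ Fin (n / 2)) (Fin (n / 2) ⊕ Fin (n / 2)) ℝ)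
        (b zstar : Fin (n / 2) ⊕ Fin (n / 2) → ℝ),
        A = Matrix.fromBlocks 0 M (-Mᵀ) 0 →
        b = Sum.elim b1 (-b2) →
        zstar = -(A⁻¹ *ᵥ b) →
        specNorm A ≤ L ∧ _root_.enorm (A⁻¹ *ᵥ b) = D ∧
        ∀ z : ℕ → (Fin (n / 2) ⊕ Fin (n / 2)) → ℝ,
          z 0 = 0 →
          (∀ t : ℕ, z (t + 1)
              = z t - η t • (A *ᵥ (z t - η t • (A *ᵥ z t + b)) + b)) →
          L * D ^ 2 / (4 * Real.sqrt T)
            ≤ gapBilin M b1 b2 (fun i => zstar (Sum.inl i)) (fun i => zstar (Sum.inr i)) D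
                (fun i => z T (Sum.inl i)) (fun i => z T (Sum.inr i)) := by
  have : NeZero (n / 2) := ⟨by omega⟩
  have hsqrtT : 1 ≤ Real.sqrt T := Real.one_le_sqrt.mpr (by exact_mod_cast (by omega : 1 ≤ T))
  set γ := L / (2 * Real.sqrt T) with hγ
  have hγ0 : 0 < γ := by positivity
  set p : Fin (n / 2) → ℝ := Pi.single 0 D
  refine ⟨γ • 1, 0, γ • p, ?_, ?_⟩
  · simpa [Algebra.algebraMap_eq_smul_one] using hγ0.ne'.isUnit.map (algebraMap ℝ (Matrix _ _ ℝ))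
  rintro A b zs rfl rfl rfl
  rw [fromBlocks_smul_one_eq_smul_neg_J, inv_smul_neg_J_mulVec hγ0.ne']
  refine ⟨?_, ?_, fun z hz0 hz => ?_⟩
  · rw [specNorm_smul_neg_J, abs_of_pos hγ0]
    exact div_le_self hL.le (by linarith)
  · rw [enorm_sumElim_zero, enorm_single, abs_of_pos hD]
  set c := egMultiplier (fun k => η k * γ) T
  have hzT := eg_iterate_smul_neg_J γ p η z hz0 hz T
  have hxT : (fun i => z T (Sum.inl i)) - (fun i => (-Sum.elim p (0 : Fin (n / 2) → ℝ)) (Sum.inl i))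
      = c.re • p := by
    funext i; simpa using congrFun hzT (Sum.inl i)
  have hyT : (fun i => z T (Sum.inr i)) - (fun i => (-Sum.elim p (0 : Fin (n / 2) → ℝ)) (Sum.inr i))
      = -(c.im • p) := by
    funext i; simpa using congrFun hzT (Sum.inr i)
  have hc : 1 / 2 ≤ ‖c‖ :=
    one_half_le_norm_egMultiplier ((sum_sq_mul_le_one_fourth hL hη T).trans (by norm_num))
  rw [gapBilin_smul_one_eq hγ0.le hD.le (by ext; simp) (by ext; simp), hxT, hyT, enorm_neg',
    enorm_smul', enorm_smul', enorm_single, abs_of_pos hD]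
  calc L * D ^ 2 / (4 * Real.sqrt T) = γ * D ^ 2 * (1 / 2) := by rw [hγ]; ring
    _ ≤ γ * D ^ 2 * (|c.re| + |c.im|) := by
      gcongr
      exact hc.trans (Complex.norm_le_abs_re_add_abs_im c)
    _ = γ * D * (|c.re| * D + |c.im| * D) := by ring

/-- Lower bound for the last iterate of extragradient with arbitrary time-varying step sizes
`η_t ∈ (0, 1/L)`: there is a bilinear hard instance, given by `A = [[0, M], [−Mᵀ, 0]]`,
`b = (b1, −b2)`, `M` invertible, `‖A‖_σ ≤ L`, `‖A⁻¹b‖ = D`, and saddle point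
`(x*, y*) = −A⁻¹b`, on which the iterates `z⁰ = 0`,
`z^{t+1} = z^t − η_t F(z^t − η_t F(z^t))` with `F(z) = Az + b` satisfy
`Gap_f^Z(x^T, y^T) ≥ LD²/(4√T)`, where `Z = B̄(x*, D) × B̄(y*, D)`. -/
theorem eg_timevarying_lower_bound
    (n : ℕ) (hn : 2 ≤ n) (hneven : Even n)
    (L D : ℝ) (hL : 0 < L) (hD : 0 < D)
    (T : ℕ) (hT : 2 ≤ T)
    (η : ℕ → ℝ) (hη : ∀ t : ℕ, η t ∈ Set.Ioo 0 (1 / L)) :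
    ∃ (M : Matrix (Fin (n / 2)) (Fin (n / 2)) ℝ) (b1 b2 : Fin (n / 2) → ℝ),
      IsUnit M ∧
      ∀ (A : Matrix (Fin (n / 2) ⊕ Fin (n / 2)) (Fin (n / 2) ⊕ Fin (n / 2)) ℝ)
        (b zstar : Fin (n / 2) ⊕ Fin (n / 2) → ℝ),
        A = Matrix.fromBlocks 0 M (-Mᵀ) 0 →
        b = Sum.elim b1 (-b2) →
        zstar = -(A⁻¹ *ᵥ b) →
        specNorm A ≤ L ∧ _root_.enorm (A⁻¹ *ᵥ b) = D ∧
        ∀ z : ℕ → (Fin (n / 2) ⊕ Fin (n / 2)) → ℝ,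
          z 0 = 0 →
          (∀ t : ℕ, z (t + 1)
              = z t - η t • (A *ᵥ (z t - η t • (A *ᵥ z t + b)) + b)) →
          L * D ^ 2 / (4 * Real.sqrt T)
            ≤ gapBilin M b1 b2 (fun i => zstar (Sum.inl i)) (fun i => zstar (Sum.inr i)) D
                (fun i => z T (Sum.inl i)) (fun i => z T (Sum.inr i)) :=
  eg_timevarying_lower_bound_general n hn L D hL hD T hT η hη
end
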